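/- Let u_max > 0 and β > 0, define the barrier action cost g(u) = −(2 β u_max / π) · Real.log (Real.cos (π u / (2 u_max))), and let w ∈ ℝ. Set u* = (2 u_max / π) · Real.arctan (w / β). Then u* ∈ (−u_max, u_max), and u* is the unique maximizer of u ↦ w·u − g(u) on (−u_max, u_max): for every u ∈ (−u_max, u_max) with u ≠ u*, w·u − g(u) < w·u* − g(u*). -/

import Mathlib

open Real Set

/-!
Substituting `θ = π u / (2 u_max)` turns the objective into `(2 β u_max / π) (a θ + log cos θ)`
with `a = w / β`. On `(-π/2, π/2)` the function `θ ↦ a θ + log cos θ` has the strictly decreasing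
derivative `a - tan θ`, so it is strictly concave, and its critical point `θ = arctan a` is its
unique maximizer.
-/

theorem StrictConcaveOn.lt_of_hasDerivAt_eq_zero {S : Set ℝ} {f : ℝ → ℝ} {x₀ x : ℝ}
    (hf : StrictConcaveOn ℝ S f) (hx₀ : x₀ ∈ S) (hf₀ : HasDerivAt f 0 x₀) (hx : x ∈ S)
    (hne : x ≠ x₀) : f x < f x₀ := by
  rcases hne.lt_or_gt with hlt | hgt
  · have := hf.lt_slope_of_hasDerivAt hx hx₀ hlt hf₀
    rw [slope_def_field, div_pos_iff_of_pos_right (sub_pos.2 hlt)] at this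
    linarith
  · have := hf.slope_lt_of_hasDerivAt hx₀ hx hgt hf₀
    rw [slope_def_field, div_neg_iff] at this
    rcases this with ⟨-, h⟩ | ⟨h, -⟩ <;> linarith

theorem hasDerivAt_mul_add_log_cos (a : ℝ) {θ : ℝ} (hθ : θ ∈ Ioo (-(π / 2)) (π / 2)) :
    HasDerivAt (fun θ ↦ a * θ + log (cos θ)) (a - tan θ) θ := by
  have hcos : cos θ ≠ 0 := (cos_pos_of_mem_Ioo hθ).ne'
  refine (((hasDerivAt_id θ).const_mul a).add ((hasDerivAt_cos θ).log hcos)).congr_deriv ?_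
  rw [tan_eq_sin_div_cos]
  simp only [mul_one]
  ring

theorem strictConcaveOn_mul_add_log_cos (a : ℝ) :
    StrictConcaveOn ℝ (Ioo (-(π / 2)) (π / 2)) (fun θ ↦ a * θ + log (cos θ)) := by
  refine StrictAntiOn.strictConcaveOn_of_deriv (convex_Ioo _ _)
    (fun θ hθ ↦ (hasDerivAt_mul_add_log_cos a hθ).continuousAt.continuousWithinAt) ?_
  rw [interior_Ioo]
  intro x hx y hy hxy
  rw [(hasDerivAt_mul_add_log_cos a hx).deriv, (hasDerivAt_mul_add_log_cos a hy).deriv]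
  exact sub_lt_sub_left (strictMonoOn_tan hx hy hxy) a

theorem mul_add_log_cos_lt_of_ne_arctan (a : ℝ) {θ : ℝ} (hθ : θ ∈ Ioo (-(π / 2)) (π / 2))
    (hne : θ ≠ arctan a) :
    a * θ + log (cos θ) < a * arctan a + log (cos (arctan a)) := by
  refine (strictConcaveOn_mul_add_log_cos a).lt_of_hasDerivAt_eq_zero (arctan_mem_Ioo a) ?_ hθ hne
  simpa [tan_arctan] using hasDerivAt_mul_add_log_cos a (arctan_mem_Ioo a)

theorem stmt_13 (umax β : ℝ) (humax : 0 < umax) (hβ : 0 < β)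
    (g : ℝ → ℝ)
    (hg : ∀ u, g u = -(2 * β * umax / π) * Real.log (Real.cos (π * u / (2 * umax))))
    (w : ℝ) (ustar : ℝ) (hustar : ustar = (2 * umax / π) * Real.arctan (w / β)) :
    ustar ∈ Set.Ioo (-umax) umax ∧
      ∀ u ∈ Set.Ioo (-umax) umax, u ≠ ustar →
        w * u - g u < w * ustar - g ustar := by
  set k := π / (2 * umax) with hk_def
  have hk : 0 < k := by positivity
  have hk_umax : k * umax = π / 2 := by rw [hk_def]; field_simp
  have hmem : ∀ u, u ∈ Ioo (-umax) umax ↔ k * u ∈ Ioo (-(π / 2)) (π / 2) := by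
    intro u
    rw [← hk_umax, ← mul_neg, mem_Ioo, mem_Ioo, mul_lt_mul_iff_right₀ hk,
      mul_lt_mul_iff_right₀ hk]
  have hk_ustar : k * ustar = arctan (w / β) := by rw [hustar, hk_def]; field_simp
  have hobj : ∀ u, w * u - g u = 2 * β * umax / π * (w / β * (k * u) + log (cos (k * u))) := by
    intro u
    rw [hg, hk_def]
    field_simp
    ring
  refine ⟨(hmem ustar).2 (hk_ustar ▸ arctan_mem_Ioo _), ?_⟩
  intro u hu hne
  rw [hobj, hobj, hk_ustar]
  refine mul_lt_mul_of_pos_left (mul_add_log_cos_lt_of_ne_arctan _ ((hmem u).1 hu) ?_)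
    (by positivity)
  rw [← hk_ustar]
  exact fun h ↦ hne (mul_left_cancel₀ hk.ne' h)
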